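/- Let (M, m) be a maximally reductive pair and A ⊆ H. Suppose a, m ∈ A ∩ M, σ(a) ∉ A, σ(m) ∉ A ∪ M, and |a| − cut(A) > 0. Then (A ∪ M, m) is a reductive pair; in particular |m| − cut(A ∪ M) > 0. -/

import Mathlib

open Finset

/-- `cut d A = ∑_{x ∈ A} ∑_{y ∉ A} d x y`, the total weight of pairs
separated by the partition `{A, H ∖ A}`. -/
def cut {H : Type*} [Fintype H] [DecidableEq H] {Λ : Type*}
    [AddCommGroup Λ] [LinearOrder Λ] [IsOrderedAddMonoid Λ] (d : H → H → Λ) (A : Finset H) : Λ :=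
  ∑ x ∈ A, ∑ y ∈ Aᶜ, d x y

/-- `(X, x)` is a reductive pair if `x ∈ X`, `σ x ∉ X` and `|x| - cut X > 0`,
where `|x| = cut {x}`. -/
def IsReductivePair {H : Type*} [Fintype H] [DecidableEq H] {Λ : Type*}
    [AddCommGroup Λ] [LinearOrder Λ] [IsOrderedAddMonoid Λ] (d : H → H → Λ) (σ : H → H)
    (X : Finset H) (x : H) : Prop :=
  x ∈ X ∧ σ x ∉ X ∧ 0 < cut d {x} - cut d X

/-- `X` is a side of a reductive ideal edge if some `x` with `x` and `σ x` on
opposite sides of the partition `{X, H ∖ X}` satisfies `|x| - cut X > 0`. -/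
def IsSideOfReductiveIdealEdge {H : Type*} [Fintype H] [DecidableEq H] {Λ : Type*}
    [AddCommGroup Λ] [LinearOrder Λ] [IsOrderedAddMonoid Λ] (d : H → H → Λ) (σ : H → H)
    (X : Finset H) : Prop :=
  ∃ x : H, ((x ∈ X ∧ σ x ∉ X) ∨ (x ∉ X ∧ σ x ∈ X)) ∧ 0 < cut d {x} - cut d X

/-- `(M, m)` is maximally reductive: it is a reductive pair whose reduction
`|m| - cut M` is at least that of any reductive pair. -/
def IsMaximallyReductivePair {H : Type*} [Fintype H] [DecidableEq H] {Λ : Type*}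
    [AddCommGroup Λ] [LinearOrder Λ] [IsOrderedAddMonoid Λ] (d : H → H → Λ) (σ : H → H)
    (M : Finset H) (m : H) : Prop :=
  IsReductivePair d σ M m ∧
    ∀ X x, IsReductivePair d σ X x → cut d {x} - cut d X ≤ cut d {m} - cut d M

section Cut

variable {H : Type*} [Fintype H] [DecidableEq H] {Λ : Type*}
  [AddCommGroup Λ] [LinearOrder Λ] [IsOrderedAddMonoid Λ] (d : H → H → Λ)

lemma cut_eq_sum_ite (A : Finset H) :
    cut d A = ∑ x, ∑ y, if x ∈ A ∧ y ∉ A then d x y else 0 := by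
  simp only [cut, ite_and, ← mem_compl, sum_ite_irrel, sum_const_zero, sum_ite_mem, univ_inter]

/-- A pair separated by `A ∪ B` or by `A ∩ B` is separated by `A` or by `B`, and one separated
by both is separated by both `A` and `B`. -/
lemma cut_union_add_cut_inter_le (hnonneg : ∀ x y, 0 ≤ d x y) (A B : Finset H) :
    cut d (A ∪ B) + cut d (A ∩ B) ≤ cut d A + cut d B := by
  simp only [cut_eq_sum_ite d, ← sum_add_distrib]
  refine sum_le_sum fun x _ ↦ sum_le_sum fun y _ ↦ ?_
  by_cases hxA : x ∈ A <;> by_cases hxB : x ∈ B <;> by_cases hyA : y ∈ A <;>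
    by_cases hyB : y ∈ B <;> simp [hxA, hxB, hyA, hyB, hnonneg x y]

variable {d} {σ : H → H} {M : Finset H} {m : H}

/-- Otherwise submodularity makes the reductive pair `(A ∩ M, a)` reduce strictly more
than `(M, m)`. -/
lemma IsMaximallyReductivePair.cut_union_lt (hnonneg : ∀ x y, 0 ≤ d x y)
    (hMm : IsMaximallyReductivePair d σ M m) {A : Finset H} {a : H} (haAM : a ∈ A ∩ M)
    (hsa : σ a ∉ A) (ha : 0 < cut d {a} - cut d A) :
    cut d (A ∪ M) < cut d {m} := by
  by_contra! hle
  have hinter : cut d (A ∩ M) ≤ cut d A + cut d M - cut d (A ∪ M) :=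
    le_sub_iff_add_le'.2 (cut_union_add_cut_inter_le d hnonneg A M)
  have hlt : cut d {m} - cut d M < cut d {a} - cut d (A ∩ M) :=
    calc cut d {m} - cut d M < cut d {m} - cut d M + (cut d {a} - cut d A) :=
          lt_add_of_pos_right _ ha
      _ ≤ cut d (A ∪ M) - cut d M + (cut d {a} - cut d A) := by gcongr
      _ = cut d {a} - (cut d A + cut d M - cut d (A ∪ M)) := by abel
      _ ≤ cut d {a} - cut d (A ∩ M) := by gcongr
  have hred : IsReductivePair d σ (A ∩ M) a :=
    ⟨haAM, fun h ↦ hsa (mem_inter.1 h).1, hMm.1.2.2.trans hlt⟩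
  exact (hMm.2 _ _ hred).not_gt hlt

end Cut

theorem key_lemma_case_union_m_general {H : Type*} [Fintype H] [DecidableEq H] {Λ : Type*}
    [AddCommGroup Λ] [LinearOrder Λ] [IsOrderedAddMonoid Λ] (d : H → H → Λ)
    (hnonneg : ∀ x y, 0 ≤ d x y)
    (σ : H → H)
    (M : Finset H) (m : H) (hMm : IsMaximallyReductivePair d σ M m)
    (A : Finset H) (a : H)
    (haAM : a ∈ A ∩ M) (hmAM : m ∈ A ∩ M)
    (hsa : σ a ∉ A) (hsm : σ m ∉ A ∪ M)
    (ha : 0 < cut d {a} - cut d A) :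
    IsReductivePair d σ (A ∪ M) m ∧ 0 < cut d {m} - cut d (A ∪ M) := by
  have key : 0 < cut d {m} - cut d (A ∪ M) :=
    sub_pos.2 (hMm.cut_union_lt hnonneg haAM hsa ha)
  exact ⟨⟨mem_union_left M (mem_inter.1 hmAM).1, hsm, key⟩, key⟩

/-- Case of the Key Lemma: if `a, m ∈ A ∩ M`, `σ a ∉ A`, `σ m ∉ A ∪ M` and
`|a| - cut A > 0`, then `(A ∪ M, m)` is a reductive pair;
in particular `|m| - cut (A ∪ M) > 0`. -/
theorem key_lemma_case_union_m {H : Type*} [Fintype H] [DecidableEq H] {Λ : Type*}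
    [AddCommGroup Λ] [LinearOrder Λ] [IsOrderedAddMonoid Λ] (d : H → H → Λ)
    (hsymm : ∀ x y, d x y = d y x) (hnonneg : ∀ x y, 0 ≤ d x y)
    (σ : H → H) (hinv : ∀ x, σ (σ x) = x) (hfix : ∀ x, σ x ≠ x)
    (hσnorm : ∀ x, cut d {σ x} = cut d {x})
    (M : Finset H) (m : H) (hMm : IsMaximallyReductivePair d σ M m)
    (A : Finset H) (a : H)
    (haAM : a ∈ A ∩ M) (hmAM : m ∈ A ∩ M)
    (hsa : σ a ∉ A) (hsm : σ m ∉ A ∪ M)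
    (ha : 0 < cut d {a} - cut d A) :
    IsReductivePair d σ (A ∪ M) m ∧ 0 < cut d {m} - cut d (A ∪ M) :=
  key_lemma_case_union_m_general d hnonneg σ M m hMm A a haAM hmAM hsa hsm ha
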